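/- arXiv:0708.2545 — 4 statements merged into one kernel-verified Lean document; each statement's English description precedes it below -/
import Mathlib

section
/- Let H be a semicomplete digraph with possible loops such that: L (the reflexive part) contains neither R nor C*_3 as an induced subdigraph and the underlying graph of L^sym is a proper interval graph; I (the loopless part) is a transitive tournament; and H contains no induced W, R', or directed 3-cycle with at least one loop. Then the vertices of H can be ordered v_1,...,v_n so that v_i dominates v_j whenever i < j. -/
/-!
Excluding `W` and symmetric arcs in `I` forces every symmetric arc to join two looped vertices;
with that, transitivity of `I` and the excluded `R'`, `R` and looped directed 3-cycles make the
strict part of `H` (arcs `uv` without `vu`) transitive. Ranking each vertex by the number of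
vertices that strictly dominate it then orders `H` as required: a non-arc `uv` forces `vu` to be
strict, which puts `v` strictly before `u` in the ranking.
-/

section StrictDomination

variable {α : Type*} (A : α → α → Prop)

def StrictlyDominates (u v : α) : Prop := A u v ∧ ¬ A v u

variable {A}

theorem loop_of_symmetric_arc
    (hnoW : ¬ ∃ a b : α, a ≠ b ∧ A a b ∧ A b a ∧ A b b ∧ ¬ A a a)
    (hItour : ∀ u v : α, ¬ A u u → ¬ A v v → u ≠ v → ¬ (A u v ∧ A v u))
    {u v : α} (huv : u ≠ v) (hAuv : A u v) (hAvu : A v u) : A u u := by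
  by_contra huu
  by_cases hvv : A v v
  · exact hnoW ⟨u, v, huv, hAuv, hAvu, hvv, huu⟩
  · exact hItour u v huu hvv huv ⟨hAuv, hAvu⟩

theorem StrictlyDominates.trans
    (hsemi : ∀ u v : α, u ≠ v → A u v ∨ A v u)
    (hnoW : ¬ ∃ a b : α, a ≠ b ∧ A a b ∧ A b a ∧ A b b ∧ ¬ A a a)
    (hnoR' : ¬ ∃ a b c : α, a ≠ b ∧ a ≠ c ∧ b ≠ c ∧
      A a b ∧ ¬ A b a ∧ A b c ∧ A c b ∧ A c a ∧ ¬ A a c ∧ A b b ∧ A c c ∧ ¬ A a a)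
    (hnoC3loop : ¬ ∃ a b c : α, a ≠ b ∧ a ≠ c ∧ b ≠ c ∧
      A a b ∧ A b c ∧ A c a ∧ ¬ A b a ∧ ¬ A c b ∧ ¬ A a c ∧ (A a a ∨ A b b ∨ A c c))
    (hLnoR : ¬ ∃ a b c : α, A a a ∧ A b b ∧ A c c ∧ a ≠ b ∧ a ≠ c ∧ b ≠ c ∧
      A a b ∧ A b c ∧ A c a ∧ A a c ∧ ¬ A b a ∧ ¬ A c b)
    (hItour : ∀ u v : α, ¬ A u u → ¬ A v v → u ≠ v → ¬ (A u v ∧ A v u))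
    (hItrans : ∀ u v w : α, ¬ A u u → ¬ A v v → ¬ A w w → A u v → A v w → A u w)
    {u v w : α} (huv : StrictlyDominates A u v) (hvw : StrictlyDominates A v w) :
    StrictlyDominates A u w := by
  obtain ⟨hAuv, hAvu⟩ := huv
  obtain ⟨hAvw, hAwv⟩ := hvw
  have hu_ne_v : u ≠ v := by rintro rfl; exact hAvu hAuv
  have hv_ne_w : v ≠ w := by rintro rfl; exact hAwv hAvw
  have hu_ne_w : u ≠ w := by rintro rfl; exact hAvu hAvw
  have hAuw : A u w := by
    by_contra hAuw
    have hAwu : A w u := (hsemi u w hu_ne_w).resolve_left hAuw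
    by_cases hloop : A u u ∨ A v v ∨ A w w
    · exact hnoC3loop ⟨u, v, w, hu_ne_v, hu_ne_w, hv_ne_w, hAuv, hAvw, hAwu, hAvu, hAwv, hAuw,
        hloop⟩
    · rw [not_or, not_or] at hloop
      exact hAuw (hItrans u v w hloop.1 hloop.2.1 hloop.2.2 hAuv hAvw)
  refine ⟨hAuw, fun hAwu => ?_⟩
  have huu := loop_of_symmetric_arc hnoW hItour hu_ne_w hAuw hAwu
  have hww := loop_of_symmetric_arc hnoW hItour hu_ne_w.symm hAwu hAuw
  by_cases hvv : A v v
  · exact hLnoR ⟨u, v, w, huu, hvv, hww, hu_ne_v, hu_ne_w, hv_ne_w, hAuv, hAvw, hAwu, hAuw,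
      hAvu, hAwv⟩
  · exact hnoR' ⟨v, w, u, hv_ne_w, hu_ne_v.symm, hu_ne_w.symm, hAvw, hAwv, hAwu, hAuw, hAuv,
      hAvu, hww, huu, hvv⟩

theorem ncard_strictlyDominates_lt [Finite α]
    (htrans : ∀ u v w : α, StrictlyDominates A u v → StrictlyDominates A v w →
      StrictlyDominates A u w)
    {u v : α} (huv : StrictlyDominates A u v) :
    {w | StrictlyDominates A w u}.ncard < {w | StrictlyDominates A w v}.ncard := by
  exact Set.ncard_lt_ncard (Set.ssubset_iff_of_subset (fun w hwu => htrans w u v hwu huv) |>.2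
    ⟨u, huv, fun huu => huu.2 huu.1⟩)

end StrictDomination

theorem exists_perm_forall_lt_of_strictlyDominates_trans {n : ℕ} {A : Fin n → Fin n → Prop}
    (hsemi : ∀ u v : Fin n, u ≠ v → A u v ∨ A v u)
    (htrans : ∀ u v w : Fin n, StrictlyDominates A u v → StrictlyDominates A v w →
      StrictlyDominates A u w) :
    ∃ σ : Equiv.Perm (Fin n), ∀ i j : Fin n, i < j → A (σ i) (σ j) := by
  set rank : Fin n → ℕ := fun v => {w | StrictlyDominates A w v}.ncard
  refine ⟨Tuple.sort rank, fun i j hij => ?_⟩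
  by_contra hA
  have hne : Tuple.sort rank i ≠ Tuple.sort rank j := (Tuple.sort rank).injective.ne hij.ne
  have hji : StrictlyDominates A (Tuple.sort rank j) (Tuple.sort rank i) :=
    ⟨(hsemi _ _ hne).resolve_left hA, hA⟩
  exact (ncard_strictlyDominates_lt htrans hji).not_ge (Tuple.monotone_sort rank hij.le)

theorem stmt8_general {n : ℕ} (A : Fin n → Fin n → Prop)
    (hsemi : ∀ u v : Fin n, u ≠ v → A u v ∨ A v u)
    (hnoW : ¬ ∃ a b : Fin n, a ≠ b ∧ A a b ∧ A b a ∧ A b b ∧ ¬ A a a)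
    (hnoR' : ¬ ∃ a b c : Fin n, a ≠ b ∧ a ≠ c ∧ b ≠ c ∧
      A a b ∧ ¬ A b a ∧ A b c ∧ A c b ∧ A c a ∧ ¬ A a c ∧ A b b ∧ A c c ∧ ¬ A a a)
    (hnoC3loop : ¬ ∃ a b c : Fin n, a ≠ b ∧ a ≠ c ∧ b ≠ c ∧
      A a b ∧ A b c ∧ A c a ∧ ¬ A b a ∧ ¬ A c b ∧ ¬ A a c ∧ (A a a ∨ A b b ∨ A c c))
    (hLnoR : ¬ ∃ a b c : Fin n, A a a ∧ A b b ∧ A c c ∧ a ≠ b ∧ a ≠ c ∧ b ≠ c ∧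
      A a b ∧ A b c ∧ A c a ∧ A a c ∧ ¬ A b a ∧ ¬ A c b)
    (hItour : ∀ u v : Fin n, ¬ A u u → ¬ A v v → u ≠ v → ¬ (A u v ∧ A v u))
    (hItrans : ∀ u v w : Fin n, ¬ A u u → ¬ A v v → ¬ A w w → A u v → A v w → A u w) :
    ∃ σ : Equiv.Perm (Fin n), ∀ i j : Fin n, i < j → A (σ i) (σ j) :=
  exists_perm_forall_lt_of_strictlyDominates_trans hsemi fun _ _ _ =>
    StrictlyDominates.trans hsemi hnoW hnoR' hnoC3loop hLnoR hItour hItrans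

/-- Under the same polynomiality conditions as Statement 7, the
vertices of `H` can be ordered so that every earlier vertex dominates every later
vertex. -/
theorem stmt8 {n : ℕ} (A : Fin n → Fin n → Prop)
    (hsemi : ∀ u v : Fin n, u ≠ v → A u v ∨ A v u)
    (hnoW : ¬ ∃ a b : Fin n, a ≠ b ∧ A a b ∧ A b a ∧ A b b ∧ ¬ A a a)
    (hnoR' : ¬ ∃ a b c : Fin n, a ≠ b ∧ a ≠ c ∧ b ≠ c ∧
      A a b ∧ ¬ A b a ∧ A b c ∧ A c b ∧ A c a ∧ ¬ A a c ∧ A b b ∧ A c c ∧ ¬ A a a)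
    (hnoC3loop : ¬ ∃ a b c : Fin n, a ≠ b ∧ a ≠ c ∧ b ≠ c ∧
      A a b ∧ A b c ∧ A c a ∧ ¬ A b a ∧ ¬ A c b ∧ ¬ A a c ∧ (A a a ∨ A b b ∨ A c c))
    (hLnoR : ¬ ∃ a b c : Fin n, A a a ∧ A b b ∧ A c c ∧ a ≠ b ∧ a ≠ c ∧ b ≠ c ∧
      A a b ∧ A b c ∧ A c a ∧ A a c ∧ ¬ A b a ∧ ¬ A c b)
    (hLnoC3 : ¬ ∃ a b c : Fin n, A a a ∧ A b b ∧ A c c ∧ a ≠ b ∧ a ≠ c ∧ b ≠ c ∧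
      A a b ∧ A b c ∧ A c a ∧ ¬ A b a ∧ ¬ A c b ∧ ¬ A a c)
    (hpin : ∃ f : Fin n → ℕ, (∀ x y, A x x → A y y → f x = f y → x = y) ∧
      ∀ x y z : Fin n, A x x → A y y → A z z → f x < f y → f y < f z →
        (A x z ∧ A z x) → (A x y ∧ A y x) ∧ (A y z ∧ A z y))
    (hItour : ∀ u v : Fin n, ¬ A u u → ¬ A v v → u ≠ v → ¬ (A u v ∧ A v u))
    (hItrans : ∀ u v w : Fin n, ¬ A u u → ¬ A v v → ¬ A w w → A u v → A v w → A u w) :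
    ∃ σ : Equiv.Perm (Fin n), ∀ i j : Fin n, i < j → A (σ i) (σ j) :=
  stmt8_general A hsemi hnoW hnoR' hnoC3loop hLnoR hItour hItrans
end

section
/- Let S be a reflexive semicomplete digraph not containing R as an induced subdigraph, whose symmetric subdigraph S^sym is connected (as an undirected graph) and whose underlying graph U(S^sym) is a proper interval graph. Then S does not contain C*_3 (the reflexive directed 3-cycle) as an induced subdigraph. -/
/-!
Let `m → x → y → m` be an induced reflexive directed 3-cycle and `e` symmetric-adjacent to
`m`. Since `R` is forbidden, either `e` is symmetric-adjacent to both `x` and `y`, or `e, x, y` is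
again an induced 3-cycle. Connectivity of `S^sym` and the umbrella property make consecutive
vertices of the proper interval ordering symmetric-adjacent. Take a 3-cycle whose middle vertex
`m` (in the ordering) is as early as possible and let `e` be the predecessor of `m`. In the first
case the umbrella over `e < m < z`, with `z` the last vertex of the cycle, makes `m` and `z`
symmetric-adjacent, which is impossible; in the second case `e` is the middle vertex of a new
3-cycle, against minimality.
-/

open Relation

theorem Relation.ReflTransGen.exists_boundary {α : Type*} {r : α → α → Prop}
    {p : α → Prop} {a b : α} (h : ReflTransGen r a b) (ha : p a) (hb : ¬ p b) :
    ∃ x y, r x y ∧ p x ∧ ¬ p y := by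
  induction h with
  | refl => exact absurd ha hb
  | @tail c d _ hcd ih =>
    by_cases hc : p c
    · exact ⟨c, d, hcd, hc, hb⟩
    · exact ih hc

theorem mem_uIoo_or_mem_uIoo_or_mem_uIoo {α : Type*} [LinearOrder α] {a b c : α}
    (hab : a ≠ b) (hac : a ≠ c) (hbc : b ≠ c) :
    a ∈ Set.uIoo b c ∨ b ∈ Set.uIoo c a ∨ c ∈ Set.uIoo a b := by
  simp only [Set.uIoo, Set.mem_Ioo, inf_lt_iff, lt_sup_iff]
  grind

namespace Semicomplete

variable {V : Type*} (A : V → V → Prop)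

def SymAdj (x y : V) : Prop := A x y ∧ A y x

/-- `a, b, c` induce a copy of `R`, with `a = 1`, `b = 2`, `c = 3`. -/
def InducesR (a b c : V) : Prop := A a b ∧ A b c ∧ A c a ∧ A a c ∧ ¬ A b a ∧ ¬ A c b

def IsInducedC3 (x y z : V) : Prop :=
  A x y ∧ A y z ∧ A z x ∧ ¬ A y x ∧ ¬ A z y ∧ ¬ A x z

def IsUmbrella [Preorder V] : Prop :=
  ∀ i j k : V, i < j → j < k → SymAdj A i k → SymAdj A i j ∧ SymAdj A j k

variable {A}

theorem InducesR.pairwise_ne (hrefl : ∀ v, A v v) {a b c : V} (h : InducesR A a b c) :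
    a ≠ b ∧ a ≠ c ∧ b ≠ c := by
  obtain ⟨-, hbc, -, -, hnba, hncb⟩ := h
  refine ⟨?_, ?_, ?_⟩ <;> rintro rfl
  exacts [hnba (hrefl _), hnba hbc, hncb (hrefl _)]

namespace IsInducedC3

variable {m x y : V} (h : IsInducedC3 A m x y)
include h

theorem rotate : IsInducedC3 A x y m := by
  obtain ⟨h₁, h₂, h₃, h₄, h₅, h₆⟩ := h
  exact ⟨h₂, h₃, h₁, h₅, h₆, h₄⟩

theorem not_symAdj_left : ¬ SymAdj A m x := fun hmx => h.2.2.2.1 hmx.2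

theorem not_symAdj_right : ¬ SymAdj A m y := fun hmy => h.2.2.2.2.2 hmy.1

theorem ne_left_of_symAdj {e : V} (he : SymAdj A e m) : e ≠ x := by
  rintro rfl
  exact h.not_symAdj_left ⟨he.2, he.1⟩

theorem ne_right_of_symAdj {e : V} (he : SymAdj A e m) : e ≠ y := by
  rintro rfl
  exact h.not_symAdj_right ⟨he.2, he.1⟩

theorem symAdj_or_isInducedC3_of_symAdj (htotal : ∀ u v, A u v ∨ A v u)
    (hnoR : ∀ a b c, ¬ InducesR A a b c) {e : V} (he : SymAdj A e m) :
    (SymAdj A e x ∧ SymAdj A e y) ∨ IsInducedC3 A e x y := by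
  obtain ⟨hmx, hxy, hym, hnxm, hnyx, hnmy⟩ := h
  have hex : A e x := by_contra fun hne =>
    hnoR m x e ⟨hmx, (htotal e x).resolve_left hne, he.1, he.2, hnxm, hne⟩
  have hye : A y e := by_contra fun hne =>
    hnoR e y m ⟨(htotal y e).resolve_left hne, hym, he.2, he.1, hne, hnmy⟩
  by_cases hxe : A x e
  · have hey : A e y := by_contra fun hne => hnoR x y e ⟨hxy, hye, hex, hxe, hnyx, hne⟩
    exact .inl ⟨⟨hex, hxe⟩, hey, hye⟩
  · have hney : ¬ A e y := fun hey => hnoR e x y ⟨hex, hxy, hye, hey, hxe, hnyx⟩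
    exact .inr ⟨hex, hxy, hye, hxe, hnyx, hney⟩

end IsInducedC3

namespace IsUmbrella

variable [PartialOrder V] (humb : IsUmbrella A)
include humb

theorem symAdj_left {i j k : V} (hij : i < j) (hjk : j ≤ k) (hik : SymAdj A i k) :
    SymAdj A i j := by
  rcases hjk.lt_or_eq with hjk | rfl
  exacts [(humb i j k hij hjk hik).1, hik]

theorem symAdj_right {i j k : V} (hij : i ≤ j) (hjk : j < k) (hik : SymAdj A i k) :
    SymAdj A j k := by
  rcases hij.lt_or_eq with hij | rfl
  exacts [(humb i j k hij hjk hik).2, hik]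

end IsUmbrella

section LinearOrder

variable [LinearOrder V]

theorem IsUmbrella.symAdj_of_covBy (humb : IsUmbrella A) {u w : V}
    (hconn : ReflTransGen (SymAdj A) u w) (huw : u ⋖ w) : SymAdj A u w := by
  obtain ⟨x, y, hxy, hxu, hyu⟩ := hconn.exists_boundary (p := (· ≤ u)) le_rfl huw.lt.not_ge
  have huy : SymAdj A u y := humb.symAdj_right hxu (not_le.mp hyu) hxy
  exact humb.symAdj_left huw.lt (huw.ge_of_gt (not_le.mp hyu)) huy

theorem IsInducedC3.not_mem_uIoo [WellFoundedLT V] [IsStronglyCoatomic V]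
    (htotal : ∀ u v, A u v ∨ A v u) (hnoR : ∀ a b c, ¬ InducesR A a b c)
    (humb : IsUmbrella A) (hcov : ∀ u w : V, u ⋖ w → SymAdj A u w) {m x y : V}
    (h : IsInducedC3 A m x y) : m ∉ Set.uIoo x y := by
  induction m using WellFoundedLT.induction generalizing x y with
  | _ m ih =>
  rintro ⟨hlo, hhi⟩
  obtain ⟨e, hle, hem⟩ := exists_le_covBy_of_lt hlo
  have he := hcov e m hem
  rcases h.symAdj_or_isInducedC3_of_symAdj htotal hnoR he with ⟨hex, hey⟩ | he'
  · have hez : SymAdj A e (x ⊔ y) := by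
      rcases max_choice x y with h' | h' <;> rw [h'] <;> assumption
    have hmz := humb.symAdj_right hem.le hhi hez
    rcases max_choice x y with h' | h' <;> rw [h'] at hmz
    exacts [h.not_symAdj_left hmz, h.not_symAdj_right hmz]
  · refine ih e hem.lt he' ⟨hle.lt_of_ne ?_, hem.lt.trans hhi⟩
    rcases min_choice x y with h' | h' <;> rw [h']
    exacts [(h.ne_left_of_symAdj he).symm, (h.ne_right_of_symAdj he).symm]

theorem not_isInducedC3 [WellFoundedLT V] [IsStronglyCoatomic V]
    (htotal : ∀ u v, A u v ∨ A v u) (hnoR : ∀ a b c, ¬ InducesR A a b c)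
    (hconn : ∀ u v, ReflTransGen (SymAdj A) u v) (humb : IsUmbrella A)
    {a b c : V} (hab : a ≠ b) (hac : a ≠ c) (hbc : b ≠ c) : ¬ IsInducedC3 A a b c := by
  intro h
  have hcov u w (huw : u ⋖ w) : SymAdj A u w := humb.symAdj_of_covBy (hconn u w) huw
  rcases mem_uIoo_or_mem_uIoo_or_mem_uIoo hab hac hbc with ha | hb | hc
  · exact h.not_mem_uIoo htotal hnoR humb hcov ha
  · exact h.rotate.not_mem_uIoo htotal hnoR humb hcov hb
  · exact h.rotate.rotate.not_mem_uIoo htotal hnoR humb hcov hc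

end LinearOrder

end Semicomplete

open Semicomplete in
/-- A reflexive semicomplete digraph with no induced `R`, whose
symmetric subdigraph is connected and has a proper interval underlying graph,
contains no induced reflexive directed 3-cycle. -/
theorem stmt11 {n : ℕ} (A : Fin n → Fin n → Prop)
    (hrefl : ∀ v, A v v)
    (hsemi : ∀ u v : Fin n, u ≠ v → A u v ∨ A v u)
    (hnoR : ¬ ∃ a b c : Fin n, a ≠ b ∧ a ≠ c ∧ b ≠ c ∧
      A a b ∧ A b c ∧ A c a ∧ A a c ∧ ¬ A b a ∧ ¬ A c b)
    (hconn : ∀ u v : Fin n, Relation.ReflTransGen (fun x y => A x y ∧ A y x) u v)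
    (hpin : ∃ σ : Equiv.Perm (Fin n), ∀ i j k : Fin n, i < j → j < k →
      (A (σ i) (σ k) ∧ A (σ k) (σ i)) →
      (A (σ i) (σ j) ∧ A (σ j) (σ i)) ∧ (A (σ j) (σ k) ∧ A (σ k) (σ j))) :
    ¬ ∃ a b c : Fin n, a ≠ b ∧ a ≠ c ∧ b ≠ c ∧
      A a b ∧ A b c ∧ A c a ∧ ¬ A b a ∧ ¬ A c b ∧ ¬ A a c := by
  rintro ⟨a, b, c, hab, hac, hbc, hC3⟩
  obtain ⟨σ, humb⟩ := hpin
  have htotal (u v : Fin n) : A u v ∨ A v u := by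
    rcases eq_or_ne u v with rfl | huv
    exacts [.inl (hrefl u), hsemi u v huv]
  have hnoR' (u v w : Fin n) : ¬ InducesR A u v w := fun h => by
    obtain ⟨huv, huw, hvw⟩ := h.pairwise_ne hrefl
    exact hnoR ⟨u, v, w, huv, huw, hvw, h⟩
  let B : Fin n → Fin n → Prop := fun i j => A (σ i) (σ j)
  have hconnB (i j : Fin n) : ReflTransGen (SymAdj B) i j := by
    simpa [Function.onFun] using ReflTransGen.lift (p := SymAdj B) σ.symm
      (fun x y hxy => by simpa [B, SymAdj] using hxy) (σ i) (σ j) (hconn (σ i) (σ j))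
  refine not_isInducedC3 (A := B) (fun i j => htotal (σ i) (σ j))
    (fun i j k => hnoR' (σ i) (σ j) (σ k)) hconnB humb
    (σ.symm.injective.ne hab) (σ.symm.injective.ne hac) (σ.symm.injective.ne hbc) ?_
  simpa [B, IsInducedC3] using hC3
end

section
/- Let S be a reflexive semicomplete digraph not containing R as an induced subdigraph, whose symmetric subdigraph S^sym is connected, and whose underlying graph contains no induced claw. Suppose u, v, w are vertices with u strictly dominating v, v strictly dominating w, and w strictly dominating u (i.e., they induce C*_3), chosen among all such triples to minimize the minimum pairwise distance in S^sym. If P = u, u_1, ..., u_p = v is a shortest path from u to v in S^sym with p ≥ 2, then u_1 strictly dominates v, w strictly dominates u_1, and the triple (u_1, v, w) also induces C*_3 with strictly smaller minimum pairwise distance — a contradiction; hence no such triple exists. -/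
/-!
If `u, v, w` induce `C*₃` and `u₁` is a symmetric neighbour of `u` other than `u`, then
excluding an induced `R` and an induced claw forces `u₁ → v` and `w → u₁` to be strict, so
`u₁, v, w` induce `C*₃` as well. Walking along a symmetric path from `u` to `v` therefore
eventually gives a `C*₃` with two equal vertices, which is absurd.
-/

namespace SemicompleteDigraph

variable {α : Type*} (A : α → α → Prop)

def StrictlyDominates (x y : α) : Prop := A x y ∧ ¬ A y x

def SymAdj (x y : α) : Prop := A x y ∧ A y x

def IsCyclicTriangle (u v w : α) : Prop :=
  StrictlyDominates A u v ∧ StrictlyDominates A v w ∧ StrictlyDominates A w u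

def Semicomplete : Prop := ∀ u v, u ≠ v → A u v ∨ A v u

def NoInducedR : Prop := ¬ ∃ a b c : α, a ≠ b ∧ a ≠ c ∧ b ≠ c ∧
  A a b ∧ A b c ∧ A c a ∧ A a c ∧ ¬ A b a ∧ ¬ A c b

def ClawFree : Prop := ¬ ∃ y x₁ x₂ x₃ : α,
  y ≠ x₁ ∧ y ≠ x₂ ∧ y ≠ x₃ ∧ x₁ ≠ x₂ ∧ x₁ ≠ x₃ ∧ x₂ ≠ x₃ ∧
  SymAdj A y x₁ ∧ SymAdj A y x₂ ∧ SymAdj A y x₃ ∧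
  ¬ SymAdj A x₁ x₂ ∧ ¬ SymAdj A x₁ x₃ ∧ ¬ SymAdj A x₂ x₃

variable {A}

theorem StrictlyDominates.ne {x y : α} (h : StrictlyDominates A x y) : x ≠ y := by
  rintro rfl
  exact h.2 h.1

theorem Semicomplete.strictlyDominates_of_not (hsemi : Semicomplete A) {x y : α} (hxy : x ≠ y)
    (hyx : ¬ A y x) : StrictlyDominates A x y :=
  ⟨(hsemi x y hxy).resolve_right hyx, hyx⟩

variable (hsemi : Semicomplete A) (hR : NoInducedR A) {u v w u₁ : α}
  (hC : IsCyclicTriangle A u v w) (hu₁ : SymAdj A u u₁) (hne : u₁ ≠ u)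
include hsemi hR hC hu₁ hne

theorem IsCyclicTriangle.strictlyDominates_of_symAdj (hclaw : ClawFree A) :
    StrictlyDominates A u₁ v := by
  obtain ⟨huv, hvw, hwu⟩ := hC
  have hu₁v : u₁ ≠ v := by rintro rfl; exact huv.2 hu₁.2
  have hu₁w : u₁ ≠ w := by rintro rfl; exact hwu.2 hu₁.1
  by_contra hdom
  have hvu₁ : A v u₁ := by
    by_contra h
    exact hdom (hsemi.strictlyDominates_of_not hu₁v h)
  have hu₁v' : A u₁ v := by
    by_contra h
    exact hR ⟨u, v, u₁, huv.ne, hne.symm, hu₁v.symm, huv.1, hvu₁, hu₁.2, hu₁.1, huv.2, h⟩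
  by_cases hu₁w' : A u₁ w
  · by_cases hwu₁ : A w u₁
    · exact hclaw ⟨u₁, u, v, w, hne, hu₁v, hu₁w, huv.ne, hwu.ne.symm, hvw.ne,
        ⟨hu₁.2, hu₁.1⟩, ⟨hu₁v', hvu₁⟩, ⟨hu₁w', hwu₁⟩,
        fun h => huv.2 h.2, fun h => hwu.2 h.1, fun h => hvw.2 h.2⟩
    · exact hR ⟨u₁, w, u, hu₁w, hne, hwu.ne, hu₁w', hwu.1, hu₁.1, hu₁.2, hwu₁, hwu.2⟩
  · have hwu₁ : A w u₁ := (hsemi u₁ w hu₁w).resolve_left hu₁w'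
    exact hR ⟨v, w, u₁, hvw.ne, hu₁v.symm, hu₁w.symm, hvw.1, hwu₁, hu₁v', hvu₁, hvw.2, hu₁w'⟩

theorem IsCyclicTriangle.of_symAdj (hclaw : ClawFree A) : IsCyclicTriangle A u₁ v w := by
  have hu₁v := hC.strictlyDominates_of_symAdj hsemi hR hu₁ hne hclaw
  obtain ⟨-, hvw, hwu⟩ := hC
  have hu₁w : u₁ ≠ w := by rintro rfl; exact hwu.2 hu₁.1
  refine ⟨hu₁v, hvw, hsemi.strictlyDominates_of_not hu₁w.symm ?_⟩
  intro hu₁w'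
  by_cases hwu₁ : A w u₁
  · exact hR ⟨u₁, v, w, hu₁v.ne, hu₁w, hvw.ne, hu₁v.1, hvw.1, hwu₁, hu₁w', hu₁v.2, hvw.2⟩
  · exact hR ⟨u₁, w, u, hu₁w, hne, hwu.ne, hu₁w', hwu.1, hu₁.1, hu₁.2, hwu₁, hwu.2⟩

omit hC hu₁ hne

theorem not_isCyclicTriangle_of_reflTransGen (hclaw : ClawFree A)
    (h : Relation.ReflTransGen (SymAdj A) u v) : ¬ IsCyclicTriangle A u v w := by
  induction h using Relation.ReflTransGen.head_induction_on with
  | refl => exact fun hC => hC.1.ne rfl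
  | @head u u₁ hu₁ _ ih =>
    intro hC
    by_cases hne : u₁ = u
    · exact ih (hne ▸ hC)
    · exact ih (hC.of_symAdj hsemi hR hu₁ hne hclaw)

end SemicompleteDigraph

open SemicompleteDigraph in
theorem stmt12_general {n : ℕ} (A : Fin n → Fin n → Prop)
    (hsemi : ∀ u v : Fin n, u ≠ v → A u v ∨ A v u)
    (hnoR : ¬ ∃ a b c : Fin n, a ≠ b ∧ a ≠ c ∧ b ≠ c ∧
      A a b ∧ A b c ∧ A c a ∧ A a c ∧ ¬ A b a ∧ ¬ A c b)
    (hconn : ∀ u v : Fin n, Relation.ReflTransGen (fun x y => A x y ∧ A y x) u v)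
    (hclawfree : ¬ ∃ y x₁ x₂ x₃ : Fin n,
      y ≠ x₁ ∧ y ≠ x₂ ∧ y ≠ x₃ ∧ x₁ ≠ x₂ ∧ x₁ ≠ x₃ ∧ x₂ ≠ x₃ ∧
      (A y x₁ ∧ A x₁ y) ∧ (A y x₂ ∧ A x₂ y) ∧ (A y x₃ ∧ A x₃ y) ∧
      ¬ (A x₁ x₂ ∧ A x₂ x₁) ∧ ¬ (A x₁ x₃ ∧ A x₃ x₁) ∧ ¬ (A x₂ x₃ ∧ A x₃ x₂)) :
    ¬ ∃ u v w : Fin n, u ≠ v ∧ u ≠ w ∧ v ≠ w ∧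
      (A u v ∧ ¬ A v u) ∧ (A v w ∧ ¬ A w v) ∧ (A w u ∧ ¬ A u w) := by
  rintro ⟨u, v, w, -, -, -, huv, hvw, hwu⟩
  exact not_isCyclicTriangle_of_reflTransGen hsemi hnoR hclawfree (hconn u v) ⟨huv, hvw, hwu⟩

/-- In a reflexive semicomplete digraph with no induced `R`, with
connected symmetric subdigraph whose underlying graph is claw-free, there is no
triple `u, v, w` inducing the reflexive directed 3-cycle `C*_3`
(u strictly dominates v, v strictly dominates w, w strictly dominates u). -/
theorem stmt12 {n : ℕ} (A : Fin n → Fin n → Prop)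
    (hrefl : ∀ v, A v v)
    (hsemi : ∀ u v : Fin n, u ≠ v → A u v ∨ A v u)
    (hnoR : ¬ ∃ a b c : Fin n, a ≠ b ∧ a ≠ c ∧ b ≠ c ∧
      A a b ∧ A b c ∧ A c a ∧ A a c ∧ ¬ A b a ∧ ¬ A c b)
    (hconn : ∀ u v : Fin n, Relation.ReflTransGen (fun x y => A x y ∧ A y x) u v)
    (hclawfree : ¬ ∃ y x₁ x₂ x₃ : Fin n,
      y ≠ x₁ ∧ y ≠ x₂ ∧ y ≠ x₃ ∧ x₁ ≠ x₂ ∧ x₁ ≠ x₃ ∧ x₂ ≠ x₃ ∧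
      (A y x₁ ∧ A x₁ y) ∧ (A y x₂ ∧ A x₂ y) ∧ (A y x₃ ∧ A x₃ y) ∧
      ¬ (A x₁ x₂ ∧ A x₂ x₁) ∧ ¬ (A x₁ x₃ ∧ A x₃ x₁) ∧ ¬ (A x₂ x₃ ∧ A x₃ x₂)) :
    ¬ ∃ u v w : Fin n, u ≠ v ∧ u ≠ w ∧ v ≠ w ∧
      (A u v ∧ ¬ A v u) ∧ (A v w ∧ ¬ A w v) ∧ (A w u ∧ ¬ A u w) :=
  stmt12_general A hsemi hnoR hconn hclawfree
end

section
/- Let H be a reflexive semicomplete digraph not containing R as an induced subdigraph with H^sym connected, ordered v_1,...,v_n so that the proper-interval ordering condition holds for symmetric arcs (i<j<k and v_i v_k symmetric imply v_i v_j and v_j v_k symmetric) and all consecutive arcs v_i v_{i+1} are symmetric. Then for every vertex v_i, either v_i dominates all v_k with k > i and is dominated by all v_k with k < i, or v_i dominates all v_k with k < i and is dominated by all v_k with k > i. -/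
/-!
Call a pair `p < q` with no symmetric arc between `p` and `q` forward if `p → q` and backward
if `q → p`. By the umbrella property, such pairs are closed under moving `p` down and `q` up, and
an `R`-freeness argument across the symmetric arc between two consecutive vertices shows that this
move preserves the orientation. Any two such pairs can be moved to a common pair, so all of them
have the same orientation, and every vertex sees only arcs of that orientation.
-/

section

variable {α : Type*} {A : α → α → Prop}

def IsSemicomplete (A : α → α → Prop) : Prop :=
  ∀ u v, u ≠ v → A u v ∨ A v u

def IsRFree (A : α → α → Prop) : Prop :=
  ¬ ∃ a b c, a ≠ b ∧ a ≠ c ∧ b ≠ c ∧ A a b ∧ A b c ∧ A c a ∧ A a c ∧ ¬ A b a ∧ ¬ A c b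

theorem IsSemicomplete.flip (hs : IsSemicomplete A) : IsSemicomplete (flip A) :=
  fun u v huv => (hs u v huv).symm

theorem IsRFree.flip (hR : IsRFree A) : IsRFree (flip A) :=
  fun ⟨a, b, c, hab, hac, hbc, h₁, h₂, h₃, h₄, h₅, h₆⟩ =>
    hR ⟨c, b, a, hbc.symm, hac.symm, hab.symm, h₂, h₁, h₃, h₄, h₆, h₅⟩

variable [LinearOrder α]

def IsUmbrellaOrdering (A : α → α → Prop) : Prop :=
  ∀ i j k, i < j → j < k → (A i k ∧ A k i) → (A i j ∧ A j i) ∧ (A j k ∧ A k j)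

theorem IsUmbrellaOrdering.flip (hU : IsUmbrellaOrdering A) : IsUmbrellaOrdering (flip A) :=
  fun i j k hij hjk hik =>
    let h := hU i j k hij hjk hik.symm
    ⟨h.1.symm, h.2.symm⟩

theorem not_adj_of_sym_right (hs : IsSemicomplete A) (hR : IsRFree A)
    (hU : IsUmbrellaOrdering A) {p q r : α} (hpq : p < q) (hqr : q < r)
    (hsym : A q r ∧ A r q) (h : ¬A q p) : ¬A r p := by
  intro hrp
  have hpr : ¬A p r := fun hpr => h (hU p q r hpq hqr ⟨hpr, hrp⟩).1.2
  -- `r → p → q` are then non-symmetric arcs, closing an induced `R` with the symmetric arc `q r`.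
  exact hR ⟨r, p, q, (hpq.trans hqr).ne', hqr.ne', hpq.ne, hrp,
    (hs p q hpq.ne).resolve_right h, hsym.1, hsym.2, hpr, h⟩

theorem not_adj_of_sym_left (hs : IsSemicomplete A) (hR : IsRFree A)
    (hU : IsUmbrellaOrdering A) {o p q : α} (hop : o < p) (hpq : p < q)
    (hsym : A o p ∧ A p o) (h : ¬A q p) : ¬A q o := by
  intro hqo
  have hoq : ¬A o q := fun hoq => h (hU o p q hop hpq ⟨hoq, hqo⟩).2.2
  -- `p → q → o` are then non-symmetric arcs, closing an induced `R` with the symmetric arc `o p`.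
  exact hR ⟨p, q, o, hpq.ne, hop.ne', (hop.trans hpq).ne', (hs p q hpq.ne).resolve_right h,
    hqo, hsym.1, hsym.2, h, hoq⟩

variable [SuccOrder α] [IsSuccArchimedean α] [PredOrder α] [IsPredArchimedean α]

theorem not_adj_of_le_of_le (hs : IsSemicomplete A) (hR : IsRFree A)
    (hU : IsUmbrellaOrdering A) (hcov : ∀ x y, x ⋖ y → A x y ∧ A y x) {p q P Q : α}
    (hpq : p < q) (h : ¬A q p) (hP : P ≤ p) (hQ : q ≤ Q) : ¬A Q P := by
  have hQp : ¬A Q p := by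
    induction hQ using Succ.rec with
    | rfl => exact h
    | succ Q hqQ ih =>
      by_cases hmax : IsMax Q
      · rwa [hmax.succ_eq]
      · exact not_adj_of_sym_right hs hR hU (hpq.trans_le hqQ)
          (Order.lt_succ_of_not_isMax hmax) (hcov _ _ (Order.covBy_succ_of_not_isMax hmax)) ih
  induction hP using Pred.rec with
  | rfl => exact hQp
  | pred P hPp ih =>
    by_cases hmin : IsMin P
    · rwa [hmin.pred_eq]
    · exact not_adj_of_sym_left hs hR hU (Order.pred_lt_of_not_isMin hmin)
        (hPp.trans_lt (hpq.trans_le hQ)) (hcov _ _ (Order.pred_covBy_of_not_isMin hmin)) ih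

theorem forall_lt_adj_or_forall_lt_adj_flip (hs : IsSemicomplete A) (hR : IsRFree A)
    (hU : IsUmbrellaOrdering A) (hcov : ∀ x y, x ⋖ y → A x y ∧ A y x) :
    (∀ p q, p < q → A p q) ∨ (∀ p q, p < q → A q p) := by
  by_contra! h
  obtain ⟨⟨p, q, hpq, hbwd⟩, ⟨p', q', hpq', hfwd⟩⟩ := h
  have hfwd' : ¬A (max q q') (min p p') :=
    not_adj_of_le_of_le hs hR hU hcov hpq' hfwd (min_le_right _ _) (le_max_right _ _)
  have hbwd' : ¬A (min p p') (max q q') :=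
    not_adj_of_le_of_le hs.flip hR.flip hU.flip (fun x y hxy => (hcov x y hxy).symm) hpq hbwd
      (min_le_left _ _) (le_max_left _ _)
  have hne : min p p' ≠ max q q' :=
    ((min_le_left _ _).trans_lt (hpq.trans_le (le_max_left _ _))).ne
  exact (hs _ _ hne).elim hbwd' hfwd'

end

theorem stmt13_general {n : ℕ} (A : Fin n → Fin n → Prop)
    (hsemi : ∀ u v : Fin n, u ≠ v → A u v ∨ A v u)
    (hnoR : ¬ ∃ a b c : Fin n, a ≠ b ∧ a ≠ c ∧ b ≠ c ∧
      A a b ∧ A b c ∧ A c a ∧ A a c ∧ ¬ A b a ∧ ¬ A c b)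
    (horder : ∀ i j k : Fin n, i < j → j < k → (A i k ∧ A k i) →
      (A i j ∧ A j i) ∧ (A j k ∧ A k j))
    (hconsec : ∀ i : Fin n, ∀ h : i.val + 1 < n,
      A i ⟨i.val + 1, h⟩ ∧ A ⟨i.val + 1, h⟩ i) :
    ∀ i : Fin n,
      ((∀ k : Fin n, i < k → A i k) ∧ (∀ k : Fin n, k < i → A k i)) ∨
      ((∀ k : Fin n, k < i → A i k) ∧ (∀ k : Fin n, i < k → A k i)) := by
  have hcov : ∀ x y : Fin n, x ⋖ y → A x y ∧ A y x := by
    intro x y hxy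
    have hy : (x : ℕ) + 1 = y := Nat.covBy_iff_add_one_eq.mp (Fin.covBy_iff.mp hxy)
    have hsucc : (⟨x + 1, hy ▸ y.isLt⟩ : Fin n) = y := Fin.ext hy
    exact hsucc ▸ hconsec x _
  intro i
  rcases forall_lt_adj_or_forall_lt_adj_flip hsemi hnoR horder hcov with h | h
  · exact Or.inl ⟨fun k => h i k, fun k hk => h k i hk⟩
  · exact Or.inr ⟨fun k hk => h k i hk, fun k => h i k⟩

/-- In a reflexive semicomplete digraph with no induced `R`, connected
symmetric subdigraph, ordered so that the proper-interval umbrella condition holds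
for symmetric arcs and consecutive arcs are symmetric, each vertex either dominates
all later vertices and is dominated by all earlier ones, or vice versa. -/
theorem stmt13 {n : ℕ} (A : Fin n → Fin n → Prop)
    (hrefl : ∀ v, A v v)
    (hsemi : ∀ u v : Fin n, u ≠ v → A u v ∨ A v u)
    (hnoR : ¬ ∃ a b c : Fin n, a ≠ b ∧ a ≠ c ∧ b ≠ c ∧
      A a b ∧ A b c ∧ A c a ∧ A a c ∧ ¬ A b a ∧ ¬ A c b)
    (hconn : ∀ u v : Fin n, Relation.ReflTransGen (fun x y => A x y ∧ A y x) u v)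
    (horder : ∀ i j k : Fin n, i < j → j < k → (A i k ∧ A k i) →
      (A i j ∧ A j i) ∧ (A j k ∧ A k j))
    (hconsec : ∀ i : Fin n, ∀ h : i.val + 1 < n,
      A i ⟨i.val + 1, h⟩ ∧ A ⟨i.val + 1, h⟩ i) :
    ∀ i : Fin n,
      ((∀ k : Fin n, i < k → A i k) ∧ (∀ k : Fin n, k < i → A k i)) ∨
      ((∀ k : Fin n, k < i → A i k) ∧ (∀ k : Fin n, i < k → A k i)) :=
  stmt13_general A hsemi hnoR horder hconsec
end
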